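/- Let {φ_x : x∈Ω} and {ψ_y : y∈Ω} be two mutually unbiased bases of a 2-dimensional complex Hilbert space H with |Ω| = 2, and let λ, μ ∈ ℝ with λ² + μ² ≤ 1. Define C(x,y) = (1/2)·A_λ(x) + (1/2)·B_μ(y) − (1/4)·1 for all x, y ∈ Ω. Then each C(x,y) is positive semidefinite and C is a joint observable of A_λ and B_μ; in particular, the observables A_λ and B_μ are compatible. -/

import Mathlib

open scoped InnerProductSpace

noncomputable section

/-- An observable with outcome set `Ω`: positive semidefinite operators summing to `1`. -/
def IsObservable {Ω H : Type*} [Fintype Ω] [NormedAddCommGroup H] [InnerProductSpace ℂ H]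
    [CompleteSpace H] (A : Ω → H →L[ℂ] H) : Prop :=
  (∀ x, (A x).IsPositive) ∧ (∑ x, A x) = 1

/-- `C` is a joint observable of `A` and `B`. -/
def IsJointObservable {Ω H : Type*} [Fintype Ω] [NormedAddCommGroup H] [InnerProductSpace ℂ H]
    [CompleteSpace H] (C : Ω × Ω → H →L[ℂ] H) (A B : Ω → H →L[ℂ] H) : Prop :=
  IsObservable C ∧ (∀ x, (∑ y, C (x, y)) = A x) ∧ (∀ y, (∑ x, C (x, y)) = B y)

/-- The set of all compatible pairs of observables. -/
def CO (Ω H : Type*) [Fintype Ω] [NormedAddCommGroup H] [InnerProductSpace ℂ H]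
    [CompleteSpace H] : Set ((Ω → H →L[ℂ] H) × (Ω → H →L[ℂ] H)) :=
  {AB | ∃ C, IsJointObservable C AB.1 AB.2}

/-- The rank-one operator `|φ⟩⟨φ|`. -/
def outer {H : Type*} [NormedAddCommGroup H] [InnerProductSpace ℂ H] (φ : H) : H →L[ℂ] H :=
  (innerSL ℂ φ).smulRight φ

/-!
Write `C (x, y) = (λ/2) P + (μ/2) Q + ((1 - λ - μ)/4) 1` with `P = |φ x⟩⟨φ x|`, `Q = |ψ y⟩⟨ψ y|`.
Its quadratic form at `v` is `(‖v‖² + λ s + μ r) / 4`, where `s` and `r` are the components of the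
(unnormalised) Bloch vector of `v` along the axes of `φ x` and `ψ y`. Unbiasedness in dimension 2
makes these two axes orthogonal, so `s² + r² ≤ ‖v‖⁴`, and Cauchy–Schwarz with `λ² + μ² ≤ 1` gives
`|λ s + μ r| ≤ ‖v‖²`. The margins are exact because each noisy observable sums to `1`.
-/

open InnerProductSpace (rankOne)

lemma abs_mul_add_mul_le_of_sq_add_sq_le {l m s r t : ℝ} (hlm : l ^ 2 + m ^ 2 ≤ 1)
    (ht : 0 ≤ t) (hsr : s ^ 2 + r ^ 2 ≤ t ^ 2) : |l * s + m * r| ≤ t := by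
  refine abs_le_of_sq_le_sq ?_ ht
  nlinarith [sq_nonneg (l * r - m * s), mul_le_mul hlm hsr (by positivity) zero_le_one]

section Outer

variable {H : Type*} [NormedAddCommGroup H] [InnerProductSpace ℂ H]

lemma outer_eq_rankOne (e : H) : outer e = rankOne ℂ e e := rfl

lemma re_inner_outer_apply_self (e v : H) : RCLike.re ⟪outer e v, v⟫_ℂ = ‖⟪e, v⟫_ℂ‖ ^ 2 := by
  rw [outer_eq_rankOne, InnerProductSpace.rankOne_apply, inner_smul_left, ← inner_conj_symm,
    RCLike.conj_mul, ← RCLike.ofReal_pow, RCLike.ofReal_re]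

lemma OrthonormalBasis.sum_outer {Ω : Type*} [Fintype Ω] (b : OrthonormalBasis Ω ℂ H) :
    ∑ i, outer (b i) = 1 :=
  b.sum_rankOne_eq_id

lemma sum_smul_outer_add_smul_one {Ω : Type*} [Fintype Ω] (hcard : Fintype.card Ω = 2)
    (b : OrthonormalBasis Ω ℂ H) (lam : ℝ) :
    ∑ i, (lam • outer (b i) + ((1 - lam) / 2) • (1 : H →L[ℂ] H)) = 1 := by
  rw [Finset.sum_add_distrib, ← Finset.smul_sum, b.sum_outer, Finset.sum_const, Finset.card_univ,
    hcard]
  module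

lemma isSelfAdjoint_smul_outer [CompleteSpace H] (a : ℝ) (e : H) : IsSelfAdjoint (a • outer e) :=
  (IsSelfAdjoint.all a).smul (InnerProductSpace.isPositive_rankOne_self e).isSelfAdjoint

/-- For a unit vector `e`, this is `⟪v, (2 • outer e - 1) v⟫`: up to the factor `‖v‖ ^ 2`, the
component of the Bloch vector of `v` along the axis of `e`. -/
def blochCoord (e v : H) : ℝ := 2 * ‖⟪e, v⟫_ℂ‖ ^ 2 - ‖v‖ ^ 2

lemma isPositive_of_blochCoord_sq_add_sq_le [CompleteSpace H] {e f : H}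
    (hbloch : ∀ v, blochCoord e v ^ 2 + blochCoord f v ^ 2 ≤ (‖v‖ ^ 2) ^ 2)
    {lam mu : ℝ} (hdisk : lam ^ 2 + mu ^ 2 ≤ 1) :
    ((lam / 2) • outer e + (mu / 2) • outer f
      + ((1 - lam - mu) / 4) • (1 : H →L[ℂ] H)).IsPositive := by
  refine ContinuousLinearMap.isPositive_def'.mpr ⟨?_, fun v => ?_⟩
  · exact ((isSelfAdjoint_smul_outer _ e).add (isSelfAdjoint_smul_outer _ f)).add
      ((IsSelfAdjoint.all _).smul (.one _))
  · have hre : ((lam / 2) • outer e + (mu / 2) • outer f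
        + ((1 - lam - mu) / 4) • (1 : H →L[ℂ] H)).reApplyInnerSelf v
        = (‖v‖ ^ 2 + (lam * blochCoord e v + mu * blochCoord f v)) / 4 := by
      simp only [ContinuousLinearMap.reApplyInnerSelf_apply, add_apply, smul_apply,
        one_apply_eq_self, RCLike.real_smul_eq_coe_smul (K := ℂ), inner_add_left,
        inner_smul_real_left, map_add, smul_eq_mul, RCLike.re_ofReal_mul,
        re_inner_outer_apply_self, inner_self_eq_norm_sq, blochCoord]
      ring
    have hbound := abs_le.mp (abs_mul_add_mul_le_of_sq_add_sq_le hdisk (by positivity) (hbloch v))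
    rw [hre]
    linarith

lemma sq_sub_add_sq_le_of_sq_norm_eq_half {c d : ℂ} (hc : ‖c‖ ^ 2 = 2⁻¹) (hd : ‖d‖ ^ 2 = 2⁻¹)
    (α β : ℂ) : (‖α‖ ^ 2 - ‖β‖ ^ 2) ^ 2 + (2 * ‖c * α + d * β‖ ^ 2 - (‖α‖ ^ 2 + ‖β‖ ^ 2)) ^ 2
      ≤ (‖α‖ ^ 2 + ‖β‖ ^ 2) ^ 2 := by
  simp only [Complex.sq_norm] at hc hd ⊢
  have hcross := Complex.re_sq_le_normSq (c * α * (starRingEnd ℂ) (d * β))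
  simp only [Complex.normSq_mul, Complex.normSq_conj, hc, hd] at hcross
  rw [Complex.normSq_add, Complex.normSq_mul, Complex.normSq_mul, hc, hd]
  nlinarith [hcross]

lemma blochCoord_sq_add_blochCoord_sq_le {Ω : Type*} [Fintype Ω] (hcard : Fintype.card Ω = 2)
    (b : OrthonormalBasis Ω ℂ H) {e : H} (he : ∀ i, ‖⟪b i, e⟫_ℂ‖ = 1 / Real.sqrt 2) (i : Ω)
    (v : H) : blochCoord (b i) v ^ 2 + blochCoord e v ^ 2 ≤ (‖v‖ ^ 2) ^ 2 := by
  classical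
  obtain ⟨j, hji⟩ := Fintype.exists_ne_of_one_lt_card (hcard ▸ one_lt_two) i
  have huniv : (Finset.univ : Finset Ω) = {i, j} :=
    (Finset.eq_univ_of_card _ (by rw [Finset.card_pair hji.symm, hcard])).symm
  have hnorm : ‖v‖ ^ 2 = ‖⟪b i, v⟫_ℂ‖ ^ 2 + ‖⟪b j, v⟫_ℂ‖ ^ 2 := by
    rw [← b.sum_sq_norm_inner_right, huniv, Finset.sum_pair hji.symm]
  have hexpand : ⟪e, v⟫_ℂ = ⟪e, b i⟫_ℂ * ⟪b i, v⟫_ℂ + ⟪e, b j⟫_ℂ * ⟪b j, v⟫_ℂ := by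
    rw [← b.sum_inner_mul_inner, huniv, Finset.sum_pair hji.symm]
  have hhalf (k : Ω) : ‖⟪e, b k⟫_ℂ‖ ^ 2 = 2⁻¹ := by
    rw [norm_inner_symm, he, div_pow, Real.sq_sqrt zero_le_two, one_pow, one_div]
  have hineq := sq_sub_add_sq_le_of_sq_norm_eq_half (hhalf i) (hhalf j) ⟪b i, v⟫_ℂ ⟪b j, v⟫_ℂ
  rw [blochCoord, blochCoord, hexpand, hnorm]
  linarith

end Outer

lemma sum_half_smul_add_half_smul_sub_quarter_smul {M : Type*} [AddCommGroup M] [Module ℝ M]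
    {Ω : Type*} [Fintype Ω] (hcard : Fintype.card Ω = 2) (a u : M) {g : Ω → M}
    (hg : ∑ i, g i = u) : ∑ i, ((1 / 2 : ℝ) • a + (1 / 2 : ℝ) • g i - (1 / 4 : ℝ) • u) = a := by
  rw [Finset.sum_sub_distrib, Finset.sum_add_distrib, ← Finset.smul_sum (f := g), hg,
    Finset.sum_const, Finset.sum_const, Finset.card_univ, hcard]
  module

theorem qubit_joint_observable_general
    {H : Type*} [NormedAddCommGroup H] [InnerProductSpace ℂ H] [FiniteDimensional ℂ H]
    {Ω : Type*} [Fintype Ω]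
    (hcard : Fintype.card Ω = 2)
    (φ ψ : OrthonormalBasis Ω ℂ H)
    (hMUB : ∀ x y : Ω, ‖⟪φ x, ψ y⟫_ℂ‖ = 1 / Real.sqrt 2)
    (lam mu : ℝ) (hdisk : lam ^ 2 + mu ^ 2 ≤ 1)
    (C : Ω × Ω → H →L[ℂ] H)
    (hC : ∀ x y : Ω, C (x, y) =
      (1 / 2 : ℝ) • (lam • outer (φ x) + ((1 - lam) / 2) • (1 : H →L[ℂ] H))
        + (1 / 2 : ℝ) • (mu • outer (ψ y) + ((1 - mu) / 2) • (1 : H →L[ℂ] H))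
        - (1 / 4 : ℝ) • (1 : H →L[ℂ] H)) :
    (∀ p : Ω × Ω, (C p).IsPositive) ∧
      IsJointObservable C
        (fun x => lam • outer (φ x) + ((1 - lam) / 2) • (1 : H →L[ℂ] H))
        (fun y => mu • outer (ψ y) + ((1 - mu) / 2) • (1 : H →L[ℂ] H)) := by
  have hsumA := sum_smul_outer_add_smul_one hcard φ lam
  have hsumB := sum_smul_outer_add_smul_one hcard ψ mu
  have hmargA (x : Ω) : ∑ y, C (x, y) = lam • outer (φ x) + ((1 - lam) / 2) • 1 := by
    simp only [hC]
    exact sum_half_smul_add_half_smul_sub_quarter_smul hcard _ _ hsumB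
  have hmargB (y : Ω) : ∑ x, C (x, y) = mu • outer (ψ y) + ((1 - mu) / 2) • 1 := by
    simp only [hC, add_comm ((1 / 2 : ℝ) • (lam • outer (φ _) + _))]
    exact sum_half_smul_add_half_smul_sub_quarter_smul hcard _ _ hsumA
  have hpos : ∀ p : Ω × Ω, (C p).IsPositive := by
    rintro ⟨x, y⟩
    rw [show C (x, y) = (lam / 2) • outer (φ x) + (mu / 2) • outer (ψ y)
        + ((1 - lam - mu) / 4) • (1 : H →L[ℂ] H) by rw [hC]; module]
    exact isPositive_of_blochCoord_sq_add_sq_le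
      (blochCoord_sq_add_blochCoord_sq_le hcard φ (fun i => hMUB i y) x) hdisk
  refine ⟨hpos, ⟨hpos, ?_⟩, hmargA, hmargB⟩
  rw [Fintype.sum_prod_type]
  simpa only [hmargA] using hsumA

theorem qubit_joint_observable
    {H : Type*} [NormedAddCommGroup H] [InnerProductSpace ℂ H] [FiniteDimensional ℂ H]
    {Ω : Type*} [Fintype Ω] [DecidableEq Ω]
    (hcard : Fintype.card Ω = 2) (hdim : Module.finrank ℂ H = 2)
    (φ ψ : OrthonormalBasis Ω ℂ H)
    (hMUB : ∀ x y : Ω, ‖⟪φ x, ψ y⟫_ℂ‖ = 1 / Real.sqrt 2)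
    (lam mu : ℝ) (hdisk : lam ^ 2 + mu ^ 2 ≤ 1)
    (C : Ω × Ω → H →L[ℂ] H)
    (hC : ∀ x y : Ω, C (x, y) =
      (1 / 2 : ℝ) • (lam • outer (φ x) + ((1 - lam) / 2) • (1 : H →L[ℂ] H))
        + (1 / 2 : ℝ) • (mu • outer (ψ y) + ((1 - mu) / 2) • (1 : H →L[ℂ] H))
        - (1 / 4 : ℝ) • (1 : H →L[ℂ] H)) :
    (∀ p : Ω × Ω, (C p).IsPositive) ∧
      IsJointObservable C
        (fun x => lam • outer (φ x) + ((1 - lam) / 2) • (1 : H →L[ℂ] H))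
        (fun y => mu • outer (ψ y) + ((1 - mu) / 2) • (1 : H →L[ℂ] H)) :=
  qubit_joint_observable_general hcard φ ψ hMUB lam mu hdisk C hC
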